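/- arXiv:2312.01489 — 4 statements merged into one kernel-verified Lean document; each statement's English description precedes it below -/
import Mathlib

section
/- Let n ≥ 1 and let I be a finite subset of the Euclidean space ℝⁿ. Let G ⊆ I and let 𝒱 be a discrete tessellation of I induced by G. Then for every two distinct sets V, U ∈ 𝒱, the interior of the convex hull of V and the interior of the convex hull of U are disjoint: interior(convexHull ℝ V) ∩ interior(convexHull ℝ U) = ∅. -/
/-! The points at least as close to `c` as to `k ≠ c` form a closed half-space bounded by the
perpendicular bisector of `c k`, whose interior is the open half-space of points strictly
closer to `c`. A zone with generator `c` lies in this half-space for the generator `k` of any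
other zone, hence so does its convex hull, and the interior of that hull lies strictly on
`c`'s side; symmetrically, the interior of the other hull lies strictly on `k`'s side. -/

open RealInnerProductSpace

/-- A collection `𝒱` of subsets of `I` is the discrete tessellation of `I` induced by
`G ⊆ I` if: (1) distinct members are disjoint; (2) the union of the members equals `I`;
(3) every member contains exactly one element of `G` (its generator); (4) every element
of a member is at least as close to its generator as to any other element of `G`. -/
def IsDiscreteTessellation {E : Type*} [MetricSpace E] (I G : Set E)
    (𝒱 : Set (Set E)) : Prop :=
  (∀ V ∈ 𝒱, ∀ U ∈ 𝒱, V ≠ U → V ∩ U = ∅) ∧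
  ⋃₀ 𝒱 = I ∧
  (∀ V ∈ 𝒱, ∃ c, V ∩ G = {c}) ∧
  (∀ V ∈ 𝒱, ∀ c, V ∩ G = {c} → ∀ v ∈ V, ∀ k ∈ G, dist v c ≤ dist v k)

theorem interior_setOf_le_of_ne_zero {M : Type*} [AddCommGroup M] [TopologicalSpace M]
    [IsTopologicalAddGroup M] [Module ℝ M] [ContinuousSMul ℝ M]
    {f : StrongDual ℝ M} (hf : f ≠ 0) (a : ℝ) :
    interior {x | f x ≤ a} = {x | f x < a} := by
  have := (f.isOpenMap_of_ne_zero hf).preimage_interior_eq_interior_preimage f.continuous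
    (Set.Iic a)
  rwa [interior_Iic, eq_comm] at this

section Bisector

variable {E : Type*} [NormedAddCommGroup E] [InnerProductSpace ℝ E]

theorem dist_sq_sub_dist_sq (x c k : E) :
    dist x k ^ 2 - dist x c ^ 2 = ‖k‖ ^ 2 - ‖c‖ ^ 2 - 2 * ⟪k - c, x⟫ := by
  rw [dist_eq_norm, dist_eq_norm, norm_sub_sq_real, norm_sub_sq_real, inner_sub_left,
    real_inner_comm x k, real_inner_comm x c]
  ring

theorem dist_le_dist_iff_inner_le (x c k : E) :
    dist x c ≤ dist x k ↔ ⟪k - c, x⟫ ≤ (‖k‖ ^ 2 - ‖c‖ ^ 2) / 2 := by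
  rw [← pow_le_pow_iff_left₀ dist_nonneg dist_nonneg two_ne_zero]
  have := dist_sq_sub_dist_sq x c k
  constructor <;> intro h <;> linarith

theorem dist_lt_dist_iff_inner_lt (x c k : E) :
    dist x c < dist x k ↔ ⟪k - c, x⟫ < (‖k‖ ^ 2 - ‖c‖ ^ 2) / 2 := by
  rw [← pow_lt_pow_iff_left₀ dist_nonneg dist_nonneg two_ne_zero]
  have := dist_sq_sub_dist_sq x c k
  constructor <;> intro h <;> linarith

theorem convex_setOf_dist_le_dist (c k : E) : Convex ℝ {x | dist x c ≤ dist x k} := by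
  simp_rw [dist_le_dist_iff_inner_le]
  exact convex_halfSpace_le (innerₛₗ ℝ (k - c)).isLinear _

theorem interior_setOf_dist_le_dist {c k : E} (hck : c ≠ k) :
    interior {x | dist x c ≤ dist x k} = {x | dist x c < dist x k} := by
  have hf : innerSL ℝ (k - c) ≠ 0 := fun h ↦
    hck (sub_eq_zero.1 (inner_self_eq_zero.1 (DFunLike.congr_fun h (k - c)))).symm
  simp_rw [dist_le_dist_iff_inner_le, dist_lt_dist_iff_inner_lt]
  exact interior_setOf_le_of_ne_zero hf _

theorem interior_convexHull_subset_setOf_dist_lt {V : Set E} {c k : E} (hck : c ≠ k)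
    (hV : ∀ v ∈ V, dist v c ≤ dist v k) :
    interior (convexHull ℝ V) ⊆ {x | dist x c < dist x k} :=
  (interior_setOf_dist_le_dist hck).subset.trans' <|
    interior_mono (convexHull_min hV (convex_setOf_dist_le_dist c k))

end Bisector

theorem disjoint_interiors_convexHull_of_isDiscreteTessellation_general
    (n : ℕ) (I G : Set (EuclideanSpace ℝ (Fin n)))
    (𝒱 : Set (Set (EuclideanSpace ℝ (Fin n))))
    (h𝒱 : IsDiscreteTessellation I G 𝒱) :
    ∀ V ∈ 𝒱, ∀ U ∈ 𝒱, V ≠ U →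
      interior (convexHull ℝ V) ∩ interior (convexHull ℝ U) = ∅ := by
  obtain ⟨hdisj, -, hgen, hnear⟩ := h𝒱
  intro V hV U hU hVU
  obtain ⟨c, hc⟩ := hgen V hV
  obtain ⟨k, hk⟩ := hgen U hU
  have hcV : c ∈ V ∩ G := hc ▸ rfl
  have hkU : k ∈ U ∩ G := hk ▸ rfl
  have hck : c ≠ k := by
    rintro rfl
    exact (hdisj V hV U hU hVU).subset ⟨hcV.1, hkU.1⟩
  have hVc := interior_convexHull_subset_setOf_dist_lt hck fun v hv ↦
    hnear V hV c hc v hv k hkU.2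
  have hUk := interior_convexHull_subset_setOf_dist_lt hck.symm fun u hu ↦
    hnear U hU k hk u hu c hcV.2
  exact Set.eq_empty_of_forall_notMem fun x hx ↦ lt_asymm (α := ℝ) (hVc hx.1) (hUk hx.2)

/-- Proposition 1 (Disjoint convex hulls): for a discrete tessellation of a finite subset
`I` of Euclidean space `ℝⁿ`, the interiors of the convex hulls of any two distinct zones
are disjoint. -/
theorem disjoint_interiors_convexHull_of_isDiscreteTessellation
    (n : ℕ) (hn : 1 ≤ n) (I G : Set (EuclideanSpace ℝ (Fin n)))
    (hIfin : I.Finite) (hGI : G ⊆ I)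
    (𝒱 : Set (Set (EuclideanSpace ℝ (Fin n))))
    (h𝒱 : IsDiscreteTessellation I G 𝒱) :
    ∀ V ∈ 𝒱, ∀ U ∈ 𝒱, V ≠ U →
      interior (convexHull ℝ V) ∩ interior (convexHull ℝ U) = ∅ :=
  disjoint_interiors_convexHull_of_isDiscreteTessellation_general n I G 𝒱 h𝒱
end

section
/- Let E be a nontrivial real normed vector space, U ⊆ E a set, g ∈ E a point, and v a point of the interior of the convex hull of U, v ∈ interior(convexHull ℝ U). Then there exists u ∈ U such that dist(v, g) < dist(u, g). -/
open Metric

/-- A point in the interior of the convex hull of `U` (in a nontrivial real normed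
space) is strictly closer to `g` than some point of `U` is far from `g`. -/
theorem exists_dist_lt_of_mem_interior_convexHull {E : Type*} [NormedAddCommGroup E]
    [NormedSpace ℝ E] [Nontrivial E] (U : Set E) (g v : E)
    (hv : v ∈ interior (convexHull ℝ U)) :
    ∃ u ∈ U, dist v g < dist u g := by
  by_contra! hU
  have hsub : convexHull ℝ U ⊆ closedBall g (dist v g) :=
    convexHull_min (fun u hu => mem_closedBall.2 (hU u hu)) (convex_closedBall g _)
  have hball : v ∈ ball g (dist v g) := interior_closedBall' g (dist v g) ▸ interior_mono hsub hv
  exact (mem_ball.1 hball).false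
end

section
/- Let ι be a finite type, x⁰ : ι → ℤ a vector with x⁰(i) ∈ {0,1} for all i, Q a real-valued function on the binary vectors ι → ℤ, and U ∈ ℝ such that Q(z) ≤ U for every binary vector z. Let P = {i : x⁰(i) = 1} and N = {i : x⁰(i) = 0}. Then for every binary vector x : ι → ℤ (with x(i) ∈ {0,1} for all i) the integer optimality cut is valid: Q(x) ≤ (Q(x⁰) − U) · ( (Σ_{i∈P} x(i) − Σ_{i∈N} x(i)) − (|P| − 1) ) + U. Moreover, at x = x⁰ the right-hand side equals Q(x⁰) exactly. -/
/-!
For binary vectors `x` and `x⁰`, the linear form of the cut is `|P|` minus the Hamming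
distance: `∑_{i∈P} x i − ∑_{i∈N} x i = |P| − d(x, x⁰)`. The cut therefore reads
`Q x ≤ (Q x⁰ − U) (1 − d(x, x⁰)) + U`; at `x = x⁰` this is `Q x ≤ Q x⁰`, and for `x ≠ x⁰`
both factors of the product are nonpositive, so the right-hand side is at least `U ≥ Q x`.
-/

open Finset

theorem sum_filter_one_sub_sum_filter_zero_eq_card_sub_hammingDist {ι : Type*} [Fintype ι]
    {x x0 : ι → ℤ} (hx0 : ∀ i, x0 i = 0 ∨ x0 i = 1) (hx : ∀ i, x i = 0 ∨ x i = 1) :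
    ∑ i ∈ univ.filter (fun i => x0 i = 1), x i - ∑ i ∈ univ.filter (fun i => x0 i = 0), x i =
      #(univ.filter (fun i => x0 i = 1)) - hammingDist x x0 := by
  rw [sum_filter, sum_filter, ← sum_sub_distrib, hammingDist, card_filter, card_filter]
  push_cast
  rw [← sum_sub_distrib]
  refine sum_congr rfl fun i _ => ?_
  rcases hx0 i with h0 | h0 <;> rcases hx i with h | h <;> simp [h, h0]

/-- Validity and tightness of the integer (Laporte–Louveaux type) Benders optimality
cut: for a performance function `Q` on binary vectors bounded above by `U`, and an
incumbent binary vector `x⁰` with support `P` and complement `N`, every binary vector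
`x` satisfies
`Q x ≤ (Q x⁰ − U) * ((∑_{i∈P} x i − ∑_{i∈N} x i) − (|P| − 1)) + U`,
and at `x = x⁰` the right-hand side equals `Q x⁰`. -/
theorem integer_optimality_cut_valid {ι : Type*} [Fintype ι] (x0 : ι → ℤ)
    (h0 : ∀ i, x0 i = 0 ∨ x0 i = 1) (Q : (ι → ℤ) → ℝ) (U : ℝ)
    (hU : ∀ z : ι → ℤ, (∀ i, z i = 0 ∨ z i = 1) → Q z ≤ U) :
    (∀ x : ι → ℤ, (∀ i, x i = 0 ∨ x i = 1) →
      Q x ≤ (Q x0 - U) *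
          (((∑ i ∈ Finset.univ.filter (fun i => x0 i = 1), x i -
              ∑ i ∈ Finset.univ.filter (fun i => x0 i = 0), x i : ℤ) : ℝ) -
            (((Finset.univ.filter (fun i => x0 i = 1)).card : ℝ) - 1)) + U) ∧
    (Q x0 - U) *
        (((∑ i ∈ Finset.univ.filter (fun i => x0 i = 1), x0 i -
            ∑ i ∈ Finset.univ.filter (fun i => x0 i = 0), x0 i : ℤ) : ℝ) -
          (((Finset.univ.filter (fun i => x0 i = 1)).card : ℝ) - 1)) + U = Q x0 := by
  refine ⟨fun x hx => ?_, ?_⟩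
  · rw [sum_filter_one_sub_sum_filter_zero_eq_card_sub_hammingDist h0 hx]
    push_cast
    rcases eq_or_ne x x0 with rfl | hne
    · rw [hammingDist_self]
      simp
    · have hdist : (1 : ℝ) ≤ hammingDist x x0 := by exact_mod_cast hammingDist_pos.2 hne
      nlinarith [hU x hx, hU x0 h0]
  · rw [sum_filter_one_sub_sum_filter_zero_eq_card_sub_hammingDist h0 h0, hammingDist_self]
    push_cast
    ring
end

section
/- Let I be a finite type, G ⊆ I a subset with |G| = S, and a : I → ℤ with a(j) ∈ {0,1} for all j and Σ_{j∈I} a(j) = S. Let q, P̄, U ∈ ℝ satisfy q ≤ U, P̄ ≤ U, and (if {j ∈ I : a(j) = 1} = G then q ≤ P̄). Then q ≤ P̄ + (U − P̄) · (S − Σ_{j∈G} a(j)). -/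
/-!
The bracket `S - ∑ j ∈ G, a j` is the number of stations of `G` that are not generators, a natural
number. If it is `0`, all of `G` are generators, and as there are only `S = |G|` generators they are
exactly `G`, so `q ≤ P̄`. Otherwise it is at least `1` and the right-hand side is at least `U ≥ q`.
-/

open Finset

theorem Finset.sum_eq_card_filter_eq_one {I R : Type*} [AddCommMonoidWithOne R] [DecidableEq R]
    (s : Finset I) (a : I → R) (hbin : ∀ j, a j = 0 ∨ a j = 1) :
    ∑ j ∈ s, a j = #(s.filter (a · = 1)) := by
  rw [card_filter, Nat.cast_sum]
  refine sum_congr rfl fun j _ => ?_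
  rcases hbin j with h | h <;> simp [h]

theorem Finset.setOf_eq_of_card_filter_eq {I : Type*} [Fintype I] (p : I → Prop) [DecidablePred p]
    (G : Finset I) (huniv : #(univ.filter p) = #G) (hG : #(G.filter p) = #G) :
    {j | p j} = ↑G := by
  have hGp : G.filter p = G := eq_of_subset_of_card_le (filter_subset p G) hG.ge
  have hsub : G ⊆ univ.filter p := fun j hj => by
    rw [← hGp, mem_filter] at hj
    simp [hj.2]
  rw [← (eq_of_subset_of_card_le hsub huniv.le).symm, coe_filter]
  simp

theorem le_add_sub_mul_of_one_le {q P U k : ℝ} (hqU : q ≤ U) (hPU : P ≤ U) (hk : 1 ≤ k) :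
    q ≤ P + (U - P) * k := by
  nlinarith

/-- Validity of the generator-set valid inequalities of the Benders decomposition:
if `a` is a binary generator-indicator vector with exactly `S` ones, `q ≤ U`,
`P̄ ≤ U`, and `q ≤ P̄` whenever the set of generators is exactly `G` (with `|G| = S`),
then `q ≤ P̄ + (U − P̄) · (S − ∑_{j∈G} a j)`. -/
theorem generator_set_inequality_valid {I : Type*} [Fintype I] (G : Finset I)
    (S : ℕ) (hGcard : G.card = S) (a : I → ℤ)
    (hbin : ∀ j, a j = 0 ∨ a j = 1) (hsum : ∑ j, a j = (S : ℤ))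
    (q Pbar U : ℝ) (hqU : q ≤ U) (hPU : Pbar ≤ U)
    (hq : {j : I | a j = 1} = ↑G → q ≤ Pbar) :
    q ≤ Pbar + (U - Pbar) * ((S : ℝ) - ∑ j ∈ G, (a j : ℝ)) := by
  set t := #(G.filter (a · = 1))
  have hGsum : ∑ j ∈ G, (a j : ℝ) = t := by
    rw [← Int.cast_sum, sum_eq_card_filter_eq_one G a hbin, Int.cast_natCast]
  have huniv : #(univ.filter (a · = 1)) = #G := by
    rw [hGcard]; exact_mod_cast (sum_eq_card_filter_eq_one univ a hbin).symm.trans hsum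
  have htS : t ≤ S := hGcard ▸ card_filter_le G _
  rw [hGsum]
  rcases htS.eq_or_lt with htS | htS
  · have hGeq := setOf_eq_of_card_filter_eq (a · = 1) G huniv (htS.trans hGcard.symm)
    simpa [htS] using hq hGeq
  · refine le_add_sub_mul_of_one_le hqU hPU ?_
    have : (t : ℝ) + 1 ≤ S := by exact_mod_cast htS
    linarith
end
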